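/- arXiv:1811.07959 — 2 statements merged into one kernel-verified Lean document; each statement's English description precedes it below -/
import Mathlib

section
/- Let P = (X, ≤) be a chain complete N-free poset whose comparability graph is connected, let x ∈ X, let C be a maximal chain of P containing x, and let 𝔰 and 𝔦 be the supremum and the infimum of C respectively. Then 𝔰 is comparable to all elements of inc(x), or 𝔦 is comparable to all elements of inc(x). -/
/-- `(a,b,c,d)` is an `N` in the poset: the four elements are distinct, `a < b`, `c < b`,
`c < d`, and these are the only comparabilities among them. -/
def IsN {X : Type*} [PartialOrder X] (a b c d : X) : Prop :=
  a ≠ b ∧ a ≠ c ∧ a ≠ d ∧ b ≠ c ∧ b ≠ d ∧ c ≠ d ∧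
  a < b ∧ c < b ∧ c < d ∧
  (¬ a ≤ c ∧ ¬ c ≤ a) ∧ (¬ a ≤ d ∧ ¬ d ≤ a) ∧ (¬ b ≤ d ∧ ¬ d ≤ b)

/-- A poset is `N`-free if it contains no `N`. -/
def NFree (X : Type*) [PartialOrder X] : Prop :=
  ∀ a b c d : X, ¬ IsN a b c d

/-- `inc(x)`: the set of elements incomparable to `x`. -/
def incP {X : Type*} [PartialOrder X] (x : X) : Set X :=
  {y | ¬ x ≤ y ∧ ¬ y ≤ x}

/-- The comparability graph of a poset. -/
def compGraph (X : Type*) [PartialOrder X] : SimpleGraph X where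
  Adj u v := u < v ∨ v < u
  symm := ⟨by intro u v h; exact h.symm⟩
  loopless := ⟨by intro u h; rcases h with h | h <;> exact lt_irrefl u h⟩

/-- `A` is a module of the poset: every element outside `A` relates in the same way
to all elements of `A`. -/
def PModule {X : Type*} [PartialOrder X] (A : Set X) : Prop :=
  ∀ v ∉ A, ∀ a ∈ A, ∀ a' ∈ A, (v < a → v < a') ∧ (a < v → a' < v)

/-- `C⁺_x`: elements above `x` comparable to all elements of `inc(x)`. -/
def Cplus {X : Type*} [PartialOrder X] (x : X) : Set X :=
  {y | x < y ∧ ∀ z ∈ incP x, (y ≤ z ∨ z ≤ y)}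

/-- `C⁻_x`: elements below `x` comparable to all elements of `inc(x)`. -/
def Cminus {X : Type*} [PartialOrder X] (x : X) : Set X :=
  {y | y < x ∧ ∀ z ∈ incP x, (y ≤ z ∨ z ≤ y)}

/-- A poset is chain complete if every nonempty chain has a supremum and an infimum. -/
def ChainComplete (X : Type*) [PartialOrder X] : Prop :=
  ∀ C : Set X, C.Nonempty → IsChain (· ≤ ·) C → (∃ s, IsLUB C s) ∧ (∃ i, IsGLB C i)

/-!
In an `N`-free poset, the set of elements incomparable to every element of a maximal chain `C`
is closed under comparability: if `u < v`, `u` is incomparable to all of `C` and `c < v` for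
some `c ∈ C`, then maximality of `C` yields `d ∈ C` incomparable to `v`, and `(u, v, c, d)` is
an `N`. A connected comparability graph therefore leaves this set empty. So an element `z` of
`inc(x)` incomparable to `s` lies above some element of `C`, whence `i < z`; dually an element `w`
of `inc(x)` incomparable to `i` satisfies `w < s`. Now either `w < z`, and `(x, s, w, z)` is an
`N`, or `w` and `z` are incomparable, and `(w, s, i, z)` is an `N`.
-/

theorem IsMaxChain.mem_of_forall_rel_or_rel {α : Type*} {r : α → α → Prop} {C : Set α} {a : α}
    (hC : IsMaxChain r C) (ha : ∀ c ∈ C, a ≠ c → r a c ∨ r c a) : a ∈ C :=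
  (hC.2 (hC.1.insert ha) (Set.subset_insert a C)) ▸ Set.mem_insert a C

theorem IsMaxChain.exists_incompRel_of_notMem {α : Type*} [LE α] {C : Set α} {a : α}
    (hC : IsMaxChain (· ≤ ·) C) (ha : a ∉ C) : ∃ c ∈ C, IncompRel (· ≤ ·) a c := by
  by_contra! h
  refine ha (hC.mem_of_forall_rel_or_rel fun c hc _ => ?_)
  simpa [IncompRel, imp_iff_not_or] using h c hc

section NFree

variable {X : Type*} [PartialOrder X]

theorem isN_of_incompRel {a b c d : X} (hab : a < b) (hcb : c < b) (hcd : c < d)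
    (hac : IncompRel (· ≤ ·) a c) (had : IncompRel (· ≤ ·) a d) (hbd : IncompRel (· ≤ ·) b d) :
    IsN a b c d :=
  ⟨hab.ne, fun h => hac.1 (h ▸ le_rfl), fun h => had.1 (h ▸ le_rfl), hcb.ne',
    fun h => hbd.1 (h ▸ le_rfl), hcd.ne, hab, hcb, hcd, hac, had, hbd⟩

theorem NFree.dual (hN : NFree X) : NFree Xᵒᵈ := by
  rintro a b c d ⟨-, -, -, -, -, -, hab, hcb, hcd, hac, had, hbd⟩
  exact hN (OrderDual.ofDual d) (OrderDual.ofDual c) (OrderDual.ofDual b) (OrderDual.ofDual a)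
    (isN_of_incompRel hcd hcb hab hbd had hac)

variable {C : Set X} {u v : X}

theorem NFree.forall_incompRel_of_lt (hN : NFree X) (hC : IsMaxChain (· ≤ ·) C)
    (hu : ∀ c ∈ C, IncompRel (· ≤ ·) u c) (huv : u < v) : ∀ c ∈ C, IncompRel (· ≤ ·) v c := by
  intro c hc
  refine ⟨fun hvc => (hu c hc).1 (huv.le.trans hvc), fun hcv => ?_⟩
  have hvC : v ∉ C := fun hv => (hu v hv).1 huv.le
  obtain ⟨d, hdC, hvd⟩ := hC.exists_incompRel_of_notMem hvC
  have hcd : c < d :=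
    ((hC.1.total hc hdC).resolve_right fun hdc => hvd.2 (hdc.trans hcv)).lt_of_ne
      (by rintro rfl; exact hvd.2 hcv)
  exact hN u v c d (isN_of_incompRel huv (hcv.lt_of_ne (by rintro rfl; exact hvC hc)) hcd
    (hu c hc) (hu d hdC) hvd)

theorem NFree.forall_incompRel_of_gt (hN : NFree X) (hC : IsMaxChain (· ≤ ·) C)
    (hu : ∀ c ∈ C, IncompRel (· ≤ ·) u c) (hvu : v < u) : ∀ c ∈ C, IncompRel (· ≤ ·) v c :=
  fun c hc => (NFree.forall_incompRel_of_lt (X := Xᵒᵈ) hN.dual hC.symm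
    (fun c hc => (hu c hc).symm) hvu c hc).symm

theorem NFree.exists_mem_not_incompRel (hN : NFree X) (hconn : (compGraph X).Connected)
    (hC : IsMaxChain (· ≤ ·) C) (hne : C.Nonempty) (q : X) :
    ∃ c ∈ C, ¬ IncompRel (· ≤ ·) q c := by
  by_contra! hq
  obtain ⟨x, hx⟩ := hne
  have hclosed : ∀ y, Relation.ReflTransGen (compGraph X).Adj q y →
      ∀ c ∈ C, IncompRel (· ≤ ·) y c := by
    intro y hy
    induction hy with
    | refl => exact hq
    | tail _ hadj ih =>
      rcases hadj with h | h
      exacts [hN.forall_incompRel_of_lt hC ih h, hN.forall_incompRel_of_gt hC ih h]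
  have hqx := (SimpleGraph.reachable_iff_reflTransGen q x).1 (hconn q x)
  exact (hclosed x hqx x hx).1 le_rfl

end NFree

theorem sup_or_inf_of_maximal_chain_comparable_general
    {X : Type*} [PartialOrder X] (hN : NFree X)
    (hconn : (compGraph X).Connected) (x : X) (C : Set X)
    (hC : IsMaxChain (· ≤ ·) C) (hxC : x ∈ C)
    (s i : X) (hs : IsLUB C s) (hi : IsGLB C i) :
    (∀ z ∈ incP x, s ≤ z ∨ z ≤ s) ∨ (∀ z ∈ incP x, i ≤ z ∨ z ≤ i) := by
  by_contra! h
  obtain ⟨⟨z, hzx, hsz, hzs⟩, w, hwx, hiw, hwi⟩ := h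
  have hiz : i < z := by
    obtain ⟨c, hc, hcomp⟩ := hN.exists_mem_not_incompRel hconn hC ⟨x, hxC⟩ z
    have hcz : c ≤ z := by_contra fun hcz => hcomp ⟨fun hzc => hzs (hzc.trans (hs.1 hc)), hcz⟩
    exact ((hi.1 hc).trans hcz).lt_of_ne (by rintro rfl; exact hzx.2 (hi.1 hxC))
  have hws : w < s := by
    obtain ⟨c, hc, hcomp⟩ := hN.exists_mem_not_incompRel hconn hC ⟨x, hxC⟩ w
    have hwc : w ≤ c := by_contra fun hwc => hcomp ⟨hwc, fun hcw => hiw ((hi.1 hc).trans hcw)⟩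
    exact (hwc.trans (hs.1 hc)).lt_of_ne (by rintro rfl; exact hwx.1 (hs.1 hxC))
  have hix : i < x := (hi.1 hxC).lt_of_ne (by rintro rfl; exact hzx.1 hiz.le)
  have hxs : x < s := (hs.1 hxC).lt_of_ne (by rintro rfl; exact hwx.2 hws.le)
  by_cases hwz : w ≤ z
  · have hwz : w < z := hwz.lt_of_ne (by rintro rfl; exact hiw hiz.le)
    exact hN x s w z (isN_of_incompRel hxs hws hwz hwx hzx ⟨hsz, hzs⟩)
  · exact hN w s i z (isN_of_incompRel hws (hix.trans hxs) hiz ⟨hwi, hiw⟩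
      ⟨hwz, fun hzw => hiw (hiz.le.trans hzw)⟩ ⟨hsz, hzs⟩)

theorem sup_or_inf_of_maximal_chain_comparable
    {X : Type*} [PartialOrder X] (hcc : ChainComplete X) (hN : NFree X)
    (hconn : (compGraph X).Connected) (x : X) (C : Set X)
    (hC : IsMaxChain (· ≤ ·) C) (hxC : x ∈ C)
    (s i : X) (hs : IsLUB C s) (hi : IsGLB C i) :
    (∀ z ∈ incP x, s ≤ z ∨ z ≤ s) ∨ (∀ z ∈ incP x, i ≤ z ∨ z ≤ i) :=
  sup_or_inf_of_maximal_chain_comparable_general hN hconn x C hC hxC s i hs hi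
end

section
/- A poset P is prime if and only if its comparability graph is prime. -/
/-- A graph is prime if all its modules are trivial. -/
def GraphPrime {X : Type*} (G : SimpleGraph X) : Prop :=
  ∀ A : Set X, (∀ v ∉ A, (∀ a ∈ A, G.Adj v a) ∨ (∀ a ∈ A, ¬ G.Adj v a)) →
    A = ∅ ∨ (∃ a : X, A = {a}) ∨ A = Set.univ

/-- A poset is prime if all its modules are trivial. -/
def PosetPrime (X : Type*) [PartialOrder X] : Prop :=
  ∀ A : Set X, PModule A → A = ∅ ∨ (∃ a : X, A = {a}) ∨ A = Set.univ

/-!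
Every poset module is a module of the comparability graph, which gives one direction.
For the other, let `A` be a graph module that is not a poset module.
Then some `v ∉ A` splits `A`: it is comparable to all of `A`, lying above some and below
other elements. The set of `A` together with all its splitters is a nontrivial poset module,
hence everything; so every element outside `A` is comparable to all of `A`. But then the set
of elements lying below every element of `A` above `v` is a poset module containing `v` and
an element of `A` below `v`, but no element of `A` above `v`: it is nontrivial and proper.
-/

open Set

lemma eq_univ_of_trivial_of_nontrivial {α : Type*} {A : Set α}
    (h : A = ∅ ∨ (∃ a, A = {a}) ∨ A = univ) (hA : A.Nontrivial) : A = univ := by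
  rcases h with rfl | ⟨a, rfl⟩ | h
  · exact absurd hA.nonempty not_nonempty_empty
  · exact absurd hA not_nontrivial_singleton
  · exact h

section

variable {X : Type*} [PartialOrder X]

def SimpleGraph.IsModule (G : SimpleGraph X) (A : Set X) : Prop :=
  ∀ v ∉ A, (∀ a ∈ A, G.Adj v a) ∨ (∀ a ∈ A, ¬ G.Adj v a)

def Splits (A : Set X) (v : X) : Prop :=
  v ∉ A ∧ (∀ a ∈ A, v < a ∨ a < v) ∧ (∃ a ∈ A, v < a) ∧ (∃ a ∈ A, a < v)

lemma PosetPrime.eq_univ (hP : PosetPrime X) {A : Set X} (hA : PModule A)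
    (hn : A.Nontrivial) : A = univ :=
  eq_univ_of_trivial_of_nontrivial (hP A hA) hn

lemma PModule.isModule_compGraph {A : Set X} (hA : PModule A) :
    (compGraph X).IsModule A := by
  intro v hv
  by_cases h : ∃ a₀ ∈ A, (compGraph X).Adj v a₀
  · obtain ⟨a₀, ha₀, hlt | hgt⟩ := h
    · exact .inl fun a ha => .inl ((hA v hv a₀ ha₀ a ha).1 hlt)
    · exact .inl fun a ha => .inr ((hA v hv a₀ ha₀ a ha).2 hgt)
  · exact .inr fun a ha hadj => h ⟨a, ha, hadj⟩

lemma exists_splits_of_not_pModule {A : Set X} (hA : (compGraph X).IsModule A)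
    (h : ¬ PModule A) : ∃ v, Splits A v := by
  simp only [PModule, not_forall] at h
  obtain ⟨v, hv, a, ha, a', ha', hbad⟩ := h
  have hadj : ∀ b ∈ A, v < b ∨ b < v := by
    refine (hA v hv).resolve_right fun hnone => hbad ⟨fun hva => ?_, fun hav => ?_⟩
    · exact absurd (.inl hva) (hnone a ha)
    · exact absurd (.inr hav) (hnone a ha)
  refine ⟨v, hv, hadj, ?_⟩
  rcases hadj a ha with hva | hav
  · have hav' : a' < v := (hadj a' ha').resolve_left fun hva' => hbad ⟨fun _ => hva', ?_⟩
    · exact ⟨⟨a, ha, hva⟩, a', ha', hav'⟩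
    · exact fun hav => absurd hva hav.asymm
  · have hva' : v < a' := (hadj a' ha').resolve_right fun hav' => hbad ⟨?_, fun _ => hav'⟩
    · exact ⟨⟨a', ha', hva'⟩, a, ha, hav⟩
    · exact fun hva => absurd hav hva.asymm

lemma pModule_union_setOf_splits {A : Set X} (hA : (compGraph X).IsModule A) :
    PModule (A ∪ {v | Splits A v}) := by
  intro w hw b hb b' hb'
  have hwA : w ∉ A := fun h => hw (.inl h)
  have hwS : ¬ Splits A w := fun h => hw (.inr h)
  rcases hA w hwA with hcomp | hnone
  · have hside : (∀ a ∈ A, w < a) ∨ (∀ a ∈ A, a < w) := by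
      by_contra! hc
      obtain ⟨⟨a₁, ha₁, h₁⟩, a₂, ha₂, h₂⟩ := hc
      exact hwS ⟨hwA, hcomp, ⟨a₂, ha₂, (hcomp a₂ ha₂).resolve_right h₂⟩,
        a₁, ha₁, (hcomp a₁ ha₁).resolve_left h₁⟩
    rcases hside with hbelow | habove
    · have hB : ∀ c ∈ A ∪ {v | Splits A v}, w < c := by
        rintro c (hc | ⟨-, -, -, a, ha, hac⟩)
        exacts [hbelow c hc, (hbelow a ha).trans hac]
      exact ⟨fun _ => hB b' hb', fun hbw => absurd (hB b hb) hbw.asymm⟩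
    · have hB : ∀ c ∈ A ∪ {v | Splits A v}, c < w := by
        rintro c (hc | ⟨-, -, ⟨a, ha, hca⟩, -⟩)
        exacts [habove c hc, hca.trans (habove a ha)]
      exact ⟨fun hwb => absurd (hB b hb) hwb.asymm, fun _ => hB b' hb'⟩
  · have hB : ∀ c ∈ A ∪ {v | Splits A v}, ¬ w < c ∧ ¬ c < w := by
      rintro c (hc | ⟨-, -, ⟨a, ha, hca⟩, a', ha', hac⟩)
      · exact not_or.1 (hnone c hc)
      · exact ⟨fun hwc => hnone a ha (.inl (hwc.trans hca)),
          fun hcw => hnone a' ha' (.inr (hac.trans hcw))⟩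
    exact ⟨fun hwb => absurd hwb (hB b hb).1, fun hbw => absurd hbw (hB b hb).2⟩

lemma pModule_setOf_forall_lt {A : Set X} (hcomp : ∀ u ∉ A, ∀ a ∈ A, u < a ∨ a < u)
    {v : X} (hv : v ∉ A) : PModule {x | ∀ s ∈ A, v < s → x < s} := by
  intro u hu e he e' he'
  refine ⟨fun hue => absurd (fun s hs hvs => hue.trans (he s hs hvs)) hu, fun _ => ?_⟩
  obtain ⟨s₀, hs₀, hvs₀, hus₀⟩ : ∃ s ∈ A, v < s ∧ ¬ u < s := by
    simpa only [mem_ofPred_eq, not_forall, exists_prop] using hu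
  by_cases huA : u ∈ A
  · rcases hcomp v hv u huA with hvu | huv
    · exact he' u huA hvu
    · exact absurd (huv.trans hvs₀) hus₀
  · exact (he' s₀ hs₀ hvs₀).trans ((hcomp u huA s₀ hs₀).resolve_left hus₀)

end

theorem posetPrime_iff_compGraph_prime {X : Type*} [PartialOrder X] :
    PosetPrime X ↔ GraphPrime (compGraph X) := by
  refine ⟨fun hP A hA => ?_, fun hG A hA => hG A hA.isModule_compGraph⟩
  by_cases hmod : PModule A
  · exact hP A hmod
  exfalso
  obtain ⟨v, hv⟩ := exists_splits_of_not_pModule hA hmod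
  obtain ⟨a, ha, hva⟩ := hv.2.2.1
  obtain ⟨t, -, htv⟩ := hv.2.2.2
  have hB : A ∪ {v | Splits A v} = univ :=
    hP.eq_univ (pModule_union_setOf_splits hA) ⟨v, .inr hv, a, .inl ha, hva.ne⟩
  have hcomp : ∀ u ∉ A, ∀ b ∈ A, u < b ∨ b < u := fun u hu =>
    ((eq_univ_iff_forall.1 hB u).resolve_left hu).2.1
  have hE := hP.eq_univ (pModule_setOf_forall_lt hcomp hv.1)
    ⟨v, fun _ _ h => h, t, fun _ _ hs => htv.trans hs, htv.ne'⟩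
  exact lt_irrefl a (eq_univ_iff_forall.1 hE a a ha hva)
end
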